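/- Let V_r and V_s be the Weyl modules for quantum sl2 over Z[q, q^{-1}] with standard bases {v_0,...,v_r} and {v_0,...,v_s}. For 0 ≤ b ≤ r and 0 ≤ d ≤ s with a = r − b and c = s − d, define v_b ◇ v_d := Σ_{j=0}^d q^{j(j+c)} [b+j choose j] v_{b+j} ⊗ v_{d−j} if b ≤ c, and v_b ◇ v_d := Σ_{j=0}^a q^{j(j+b)} [c+j choose j] v_{b+j} ⊗ v_{d−j} if b ≥ c (the two formulas agree when b = c). Then {v_b ◇ v_d : 0 ≤ b ≤ r, 0 ≤ d ≤ s} is a basis of V_r ⊗ V_s, and v_b ◇ v_d = F^{(d)}(v_b ⊗ v_0) when b ≤ c, and v_b ◇ v_d = E^{(a)}(v_r ⊗ v_d) when b ≥ c. -/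

import Mathlib

/-!
In the coproduct formula for `F^{(d)}(v_b ⊗ v_0)` the second factor is a highest weight vector,
and in that for `E^{(a)}(v_r ⊗ v_d)` the first factor is a lowest weight vector, so one of the two
quantum binomials in each term is `[n choose n] = 1` and the formulas agree termwise with
`v_b ◇ v_d`. For the basis: `v_b ◇ v_d` is `v_b ⊗ v_d` plus a combination of vectors
`v_{b'} ⊗ v_{d'}` with `b' > b`, so the family spans `V_r ⊗ V_s`; a spanning family of
`rank`-many vectors in a finite free module over a commutative ring is a basis.
-/

open Finset LaurentPolynomial

namespace Stmt14

/-- The ground ring `ℤ[q, q⁻¹]` of Laurent polynomials. -/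
abbrev R := LaurentPolynomial ℤ

/-- The monomial `q^z`. -/
noncomputable def q (z : ℤ) : R := LaurentPolynomial.T z

/-- The balanced quantum integer `[n] = q^{n−1} + q^{n−3} + ⋯ + q^{1−n}`. -/
noncomputable def qnat (n : ℕ) : R :=
  ∑ i ∈ Finset.range n, q ((n : ℤ) - 1 - 2 * (i : ℤ))

/-- The quantum factorial `[n]!`. -/
noncomputable def qfact : ℕ → R
  | 0 => 1
  | n + 1 => qfact n * qnat (n + 1)

/-- The underlying module of `V_r ⊗ V_s`, with standard basis indexed by pairs. -/
abbrev W (r s : ℕ) := Fin (r + 1) × Fin (s + 1) → R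

/-- The standard basis vector `v_b ⊗ v_d` (zero if out of range). -/
noncomputable def sv (r s : ℕ) (b d : ℕ) : W r s :=
  if h : b ≤ r ∧ d ≤ s then
    Pi.single (⟨b, by omega⟩, ⟨d, by omega⟩) (1 : R) else 0

/-- `F^{(t)}(v_b ⊗ v_d)`, computed via the divided-power comultiplication
`Δ(F^{(t)}) = Σ_j q^{−j(t−j)} F^{(t−j)} ⊗ F^{(j)} K^{t−j}` and the Weyl module action
`F^{(m)} v_i = [i+m choose m] v_{i+m}`, `K v_i = q^{l−2i} v_i`. -/
noncomputable def Fdiv (qb : ℕ → ℕ → R) (r s t b d : ℕ) : W r s :=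
  ∑ j ∈ Finset.range (t + 1),
    (q (-((j : ℤ) * ((t : ℤ) - (j : ℤ))) + ((t : ℤ) - (j : ℤ)) * ((s : ℤ) - 2 * (d : ℤ)))
      * qb (b + (t - j)) (t - j) * qb (d + j) j) • sv r s (b + (t - j)) (d + j)

/-- `E^{(t)}(v_b ⊗ v_d)`, computed via
`Δ(E^{(t)}) = Σ_j q^{−j(t−j)} E^{(t−j)} K^{−j} ⊗ E^{(j)}` and the Weyl module action
`E^{(m)} v_i = [l−i+m choose m] v_{i−m}` (zero if `m > i`). -/
noncomputable def Ediv (qb : ℕ → ℕ → R) (r s t b d : ℕ) : W r s :=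
  ∑ j ∈ Finset.range (t + 1),
    if t - j ≤ b ∧ j ≤ d then
      (q (-((j : ℤ) * ((t : ℤ) - (j : ℤ))) - (j : ℤ) * ((r : ℤ) - 2 * (b : ℤ)))
        * qb ((r - b) + (t - j)) (t - j) * qb ((s - d) + j) j)
          • sv r s (b - (t - j)) (d - j)
    else 0

/-- The sum `Σ_{j=0}^d q^{j(j+c)} [b+j choose j] v_{b+j} ⊗ v_{d−j}`  (`c = s − d`). -/
noncomputable def can₁ (qb : ℕ → ℕ → R) (r s b d : ℕ) : W r s :=
  ∑ j ∈ Finset.range (d + 1),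
    (q ((j : ℤ) * ((j : ℤ) + ((s : ℤ) - (d : ℤ)))) * qb (b + j) j) •
      sv r s (b + j) (d - j)

/-- The sum `Σ_{j=0}^a q^{j(j+b)} [c+j choose j] v_{b+j} ⊗ v_{d−j}`  (`a = r − b`,
`c = s − d`). -/
noncomputable def can₂ (qb : ℕ → ℕ → R) (r s b d : ℕ) : W r s :=
  ∑ j ∈ Finset.range ((r - b) + 1),
    if j ≤ d then
      (q ((j : ℤ) * ((j : ℤ) + (b : ℤ))) * qb ((s - d) + j) j) •
        sv r s (b + j) (d - j)
    else 0

lemma q_zero : q 0 = 1 := T_zero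

-- The top coefficient `q^{n-1}` of `[n]` is `1`.
lemma qnat_ne_zero {n : ℕ} (hn : 0 < n) : qnat n ≠ 0 := by
  intro h
  have htop : (qnat n).coeff ((n : ℤ) - 1) = 1 := by
    unfold qnat q
    rw [AddMonoidAlgebra.coeff_sum, Finsupp.finsetSum_apply,
      Finset.sum_eq_single_of_mem 0 (Finset.mem_range.2 hn)]
    · simp
    · intro i _ hi
      rw [T_apply, if_neg (by omega)]
  simp [h] at htop

lemma qfact_ne_zero (n : ℕ) : qfact n ≠ 0 := by
  induction n with
  | zero => exact one_ne_zero
  | succ k ih => exact mul_ne_zero ih (qnat_ne_zero k.succ_pos)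

lemma sv_eq_zero_of_lt {r s b d : ℕ} (h : r < b) : sv r s b d = 0 := dif_neg (by omega)

lemma sv_fin_eq_single (r s : ℕ) (p : Fin (r + 1) × Fin (s + 1)) :
    sv r s p.1 p.2 = Pi.single p 1 :=
  dif_pos ⟨Nat.lt_succ_iff.1 p.1.isLt, Nat.lt_succ_iff.1 p.2.isLt⟩

section CanonicalBasis

variable {qb : ℕ → ℕ → R}

lemma qb_zero_right (hqb : ∀ n k : ℕ, k ≤ n → qb n k * qfact k * qfact (n - k) = qfact n)
    (n : ℕ) : qb n 0 = 1 := by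
  have h := hqb n 0 n.zero_le
  rw [qfact, mul_one, Nat.sub_zero] at h
  exact mul_right_cancel₀ (qfact_ne_zero n) (by rw [h, one_mul])

lemma qb_self (hqb : ∀ n k : ℕ, k ≤ n → qb n k * qfact k * qfact (n - k) = qfact n)
    (n : ℕ) : qb n n = 1 := by
  have h := hqb n n le_rfl
  rw [Nat.sub_self, qfact, mul_one] at h
  exact mul_right_cancel₀ (qfact_ne_zero n) (by rw [h, one_mul])

-- Reversing `j ↦ d - j` matches the two sums; `[d - j choose d - j] = 1` since `v_0` is
-- a highest weight vector.
lemma can₁_eq_Fdiv (hself : ∀ n, qb n n = 1) (r s b d : ℕ) :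
    can₁ qb r s b d = Fdiv qb r s d b 0 := by
  rw [can₁, ← Finset.sum_range_reflect, Fdiv]
  refine Finset.sum_congr rfl fun j hj => ?_
  have hjd : j ≤ d := Nat.lt_succ_iff.1 (Finset.mem_range.1 hj)
  have hexp : ((d - j : ℕ) : ℤ) * (((d - j : ℕ) : ℤ) + ((s : ℤ) - (d : ℤ)))
      = -((j : ℤ) * ((d : ℤ) - (j : ℤ)))
        + ((d : ℤ) - (j : ℤ)) * ((s : ℤ) - 2 * ((0 : ℕ) : ℤ)) := by
    push_cast [Nat.cast_sub hjd]
    ring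
  simp only [Nat.add_sub_cancel, Nat.zero_add, hself, mul_one, Nat.sub_sub_self hjd, hexp]

lemma can₂_eq_Ediv (hself : ∀ n, qb n n = 1) {r s b d : ℕ} (hb : b ≤ r) :
    can₂ qb r s b d = Ediv qb r s (r - b) r d := by
  rw [can₂, Ediv]
  refine Finset.sum_congr rfl fun j hj => ?_
  have hj : j ≤ r - b := Nat.lt_succ_iff.1 (Finset.mem_range.1 hj)
  by_cases hjd : j ≤ d
  · rw [if_pos hjd, if_pos ⟨by omega, hjd⟩]
    have hexp : ((j : ℤ) * ((j : ℤ) + (b : ℤ)))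
        = -((j : ℤ) * (((r - b : ℕ) : ℤ) - (j : ℤ)))
          - (j : ℤ) * ((r : ℤ) - 2 * (r : ℤ)) := by
      push_cast [Nat.cast_sub hb]
      ring
    rw [Nat.sub_self, Nat.zero_add, hself, mul_one, show r - (r - b - j) = b + j by omega, hexp]
  · rw [if_neg hjd, if_neg (by tauto)]

-- When `b = c` both sums run over `j ≤ min d a`: beyond `d` the terms of `can₂` vanish by the
-- guard, beyond `a` those of `can₁` vanish because `b + j > r`.
lemma can₁_eq_can₂ {r s b d : ℕ} (hd : d ≤ s) (hbc : b = s - d) :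
    can₁ qb r s b d = can₂ qb r s b d := by
  have hc : (s : ℤ) - (d : ℤ) = (b : ℤ) := by omega
  let term : ℕ → W r s := fun j =>
    if j ≤ d then
      (q ((j : ℤ) * ((j : ℤ) + (b : ℤ))) * qb ((s - d) + j) j) • sv r s (b + j) (d - j)
    else 0
  have hle : d + 1 ≤ d + (r - b) + 1 := by omega
  have h₁ : can₁ qb r s b d = ∑ j ∈ Finset.range (d + (r - b) + 1), term j := by
    rw [can₁, ← Finset.sum_subset (Finset.range_subset_range.2 hle)]
    · refine Finset.sum_congr rfl fun j hj => ?_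
      rw [show term j = _ from if_pos (Nat.lt_succ_iff.1 (Finset.mem_range.1 hj)), hc, ← hbc]
    · intro j _ hj
      exact if_neg (by simpa using hj)
  have h₂ : can₂ qb r s b d = ∑ j ∈ Finset.range (d + (r - b) + 1), term j := by
    refine Finset.sum_subset (Finset.range_subset_range.2 (by omega)) fun j _ hj => ?_
    rw [Finset.mem_range] at hj
    split_ifs
    · rw [sv_eq_zero_of_lt (by omega), smul_zero]
    · rfl
  rw [h₁, h₂]

end CanonicalBasis

noncomputable def diamond (qb : ℕ → ℕ → R) (r s b d : ℕ) : W r s :=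
  if b ≤ s - d then can₁ qb r s b d else can₂ qb r s b d

section Triangularity

variable {qb : ℕ → ℕ → R} (hzero : ∀ n, qb n 0 = 1) {r s : ℕ} (S : Submodule R (W r s))
  {b d : ℕ}
include hzero

lemma can₁_mem_iff (hgt : ∀ b', b < b' → ∀ d', sv r s b' d' ∈ S) :
    can₁ qb r s b d ∈ S ↔ sv r s b d ∈ S := by
  rw [can₁, Finset.sum_range_succ']
  simp only [Nat.cast_zero, zero_mul, q_zero, Nat.add_zero, Nat.sub_zero, hzero, mul_one, one_smul]
  exact Submodule.add_mem_iff_right _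
    (Submodule.sum_mem S fun j _ => Submodule.smul_mem S _ (hgt _ (by omega) _))

lemma can₂_mem_iff (hgt : ∀ b', b < b' → ∀ d', sv r s b' d' ∈ S) :
    can₂ qb r s b d ∈ S ↔ sv r s b d ∈ S := by
  rw [can₂, Finset.sum_range_succ', if_pos d.zero_le]
  simp only [Nat.cast_zero, zero_mul, q_zero, Nat.add_zero, Nat.sub_zero, hzero, mul_one, one_smul]
  refine Submodule.add_mem_iff_right _ (Submodule.sum_mem S fun j _ => ?_)
  split_ifs
  · exact Submodule.smul_mem S _ (hgt _ (by omega) _)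
  · exact S.zero_mem

lemma diamond_mem_iff (hgt : ∀ b', b < b' → ∀ d', sv r s b' d' ∈ S) :
    diamond qb r s b d ∈ S ↔ sv r s b d ∈ S := by
  unfold diamond
  split_ifs
  exacts [can₁_mem_iff hzero S hgt, can₂_mem_iff hzero S hgt]

-- Downward induction on `b`, starting from `sv r s b d = 0` for `b > r`.
lemma sv_mem_of_diamond_mem (hS : ∀ b d, b ≤ r → d ≤ s → diamond qb r s b d ∈ S) :
    ∀ b d, sv r s b d ∈ S := by
  suffices H : ∀ n b, r < b + n → ∀ d, sv r s b d ∈ S from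
    fun b => H (r + 1) b (by omega)
  intro n
  induction n with
  | zero => exact fun b hb d => by rw [sv_eq_zero_of_lt (by omega)]; exact S.zero_mem
  | succ n ih =>
    intro b hbn d
    by_cases hb : r < b
    · rw [sv_eq_zero_of_lt hb]; exact S.zero_mem
    by_cases hd : s < d
    · rw [sv, dif_neg (by omega)]; exact S.zero_mem
    exact (diamond_mem_iff hzero S fun b' hb' => ih b' (by omega)).1 (hS b d (by omega) (by omega))

end Triangularity

lemma span_diamond_eq_top {qb : ℕ → ℕ → R} (hzero : ∀ n, qb n 0 = 1) (r s : ℕ) :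
    Submodule.span R (Set.range fun p : Fin (r + 1) × Fin (s + 1) => diamond qb r s p.1 p.2)
      = ⊤ := by
  set S :=
    Submodule.span R (Set.range fun p : Fin (r + 1) × Fin (s + 1) => diamond qb r s p.1 p.2)
  have hsv := sv_mem_of_diamond_mem hzero S fun b d hb hd =>
    Submodule.subset_span ⟨(⟨b, Nat.lt_succ_of_le hb⟩, ⟨d, Nat.lt_succ_of_le hd⟩), rfl⟩
  rw [eq_top_iff, ← (Pi.basisFun R _).span_eq, Submodule.span_le]
  rintro _ ⟨p, rfl⟩
  rw [Pi.basisFun_apply, ← sv_fin_eq_single]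
  exact hsv _ _

end Stmt14

open Stmt14 in
theorem stmt_14_general (r s : ℕ) (qb : ℕ → ℕ → R)
    (hqb : ∀ n k : ℕ, k ≤ n → qb n k * qfact k * qfact (n - k) = qfact n) :
    (∀ b d : ℕ, b ≤ r → d ≤ s →
      (b ≤ s - d → can₁ qb r s b d = Fdiv qb r s d b 0) ∧
      (s - d ≤ b → can₂ qb r s b d = Ediv qb r s (r - b) r d) ∧
      (b = s - d → can₁ qb r s b d = can₂ qb r s b d)) ∧
    ∃ B : Module.Basis (Fin (r + 1) × Fin (s + 1)) R (W r s),
      ∀ p : Fin (r + 1) × Fin (s + 1),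
        B p = if (p.1 : ℕ) ≤ s - (p.2 : ℕ) then can₁ qb r s p.1 p.2
              else can₂ qb r s p.1 p.2 := by
  have hzero := qb_zero_right hqb
  have hself := qb_self hqb
  refine ⟨fun b d hb hd => ⟨fun _ => can₁_eq_Fdiv hself r s b d,
    fun _ => can₂_eq_Ediv hself hb, can₁_eq_can₂ hd⟩, ?_⟩
  refine ⟨basisOfTopLeSpanOfCardEqFinrank _ (span_diamond_eq_top hzero r s).ge
    (Module.finrank_fintype_fun_eq_card R).symm, fun p => ?_⟩
  rw [coe_basisOfTopLeSpanOfCardEqFinrank]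
  rfl

open Stmt14 in
/-- For the Weyl modules `V_r`, `V_s` of quantum `sl2` over `ℤ[q,q⁻¹]`,
the elements `v_b ◇ v_d` (defined by the displayed sums, using the quantum binomial
coefficients `qb`, characterized by `[n choose k]·[k]!·[n−k]! = [n]!`) satisfy
`v_b ◇ v_d = F^{(d)}(v_b ⊗ v_0)` when `b ≤ c`, and `v_b ◇ v_d = E^{(a)}(v_r ⊗ v_d)` when
`b ≥ c` (where `a = r − b`, `c = s − d`), the two formulas agree when `b = c`, and the
family `{v_b ◇ v_d}` is a basis of `V_r ⊗ V_s`. -/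
theorem stmt_14 (r s : ℕ) (qb : ℕ → ℕ → R)
    (hqb : ∀ n k : ℕ, k ≤ n → qb n k * qfact k * qfact (n - k) = qfact n)
    (hqb0 : ∀ n k : ℕ, n < k → qb n k = 0) :
    (∀ b d : ℕ, b ≤ r → d ≤ s →
      (b ≤ s - d → can₁ qb r s b d = Fdiv qb r s d b 0) ∧
      (s - d ≤ b → can₂ qb r s b d = Ediv qb r s (r - b) r d) ∧
      (b = s - d → can₁ qb r s b d = can₂ qb r s b d)) ∧
    ∃ B : Module.Basis (Fin (r + 1) × Fin (s + 1)) R (W r s),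
      ∀ p : Fin (r + 1) × Fin (s + 1),
        B p = if (p.1 : ℕ) ≤ s - (p.2 : ℕ) then can₁ qb r s p.1 p.2
              else can₂ qb r s p.1 p.2 :=
  stmt_14_general r s qb hqb
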